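/- Fuchs–van de Graaf inequalities: for density operators ρ, σ on a finite-dimensional Hilbert space, 1 - F(ρ,σ) ≤ ‖ρ - σ‖_tr ≤ √(1 - F(ρ,σ)²), where F(ρ,σ) = tr√(ρ^{1/2}σρ^{1/2}) and ‖ρ-σ‖_tr = (1/2)tr|ρ-σ|. -/

import Mathlib

/-!
Write `A = √ρ`, `B = √σ`, so that `F = tr |B A|`.

Lower bound: by the Powers–Størmer inequality `tr (A - B)² ≤ tr |A² - B²| = 2 ‖ρ - σ‖_tr`, and
`tr (A - B)² = 2 - 2 Re tr (B A) ≥ 2 - 2 F` because `|tr M| ≤ tr |M|`.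

Upper bound: the polar decomposition `B A = U |B A|` gives `C = B U` with `C Cᴴ = σ` and
`A C = |B A|`, so `tr (Aᴴ C) = F`. Then `2 (ρ - σ) = (A - C)(A + C)ᴴ + (A + C)(A - C)ᴴ`, and
Hölder's inequality bounds `tr |ρ - σ|` by `‖A - C‖₂ ‖A + C‖₂ = √((2 - 2F)(2 + 2F))`.
-/

open Matrix Kronecker BigOperators Finset
open scoped ComplexOrder

/-- The square root of a positive semidefinite matrix, as `Matrix.PosSemidef.sqrt` was defined
in the older Mathlib (removed since). -/
noncomputable def Matrix.PosSemidef.sqrt {n : Type*} [Fintype n] [DecidableEq n]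
    {A : Matrix n n ℂ} (hA : A.PosSemidef) : Matrix n n ℂ :=
  hA.1.eigenvectorUnitary.1 * diagonal ((↑) ∘ (√·) ∘ hA.1.eigenvalues) *
    (star hA.1.eigenvectorUnitary : Matrix n n ℂ)

/-- Trace distance: half the trace norm of the difference. -/
noncomputable def traceDist {d : Type*} [Fintype d] [DecidableEq d]
    (ρ σ : Matrix d d ℂ) : ℝ :=
  ((Matrix.posSemidef_conjTranspose_mul_self (ρ - σ)).sqrt.trace).re / 2

/-- A density operator: positive semidefinite with unit trace. -/
def IsDensity {d : Type*} [Fintype d] [DecidableEq d] (ρ : Matrix d d ℂ) : Prop :=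
  ρ.PosSemidef ∧ ρ.trace = 1

/-- Rank-one projection `|v⟩⟨v|` onto a vector. -/
def proj {d : Type*} [Fintype d] [DecidableEq d] (v : d → ℂ) : Matrix d d ℂ :=
  Matrix.vecMulVec v (star v)

/-- A unit vector. -/
def IsUnit' {d : Type*} [Fintype d] (v : d → ℂ) : Prop :=
  dotProduct (star v) v = 1

/-- Partial trace over the second tensor factor. -/
noncomputable def ptraceY {X Y : Type*} [Fintype X] [Fintype Y] [DecidableEq X] [DecidableEq Y]
    (ρ : Matrix (X × Y) (X × Y) ℂ) : Matrix X X ℂ :=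
  fun x x' => ∑ y : Y, ρ (x, y) (x', y)

/-- The fidelity `F(ρ,σ) = tr √(√ρ σ √ρ)` (using that `√ρ` is Hermitian, so
`√ρ σ √ρ = √ρ σ (√ρ)ᴴ` is positive semidefinite). -/
noncomputable def fidelity {d : Type*} [Fintype d] [DecidableEq d]
    {ρ σ : Matrix d d ℂ} (hρ : ρ.PosSemidef) (hσ : σ.PosSemidef) : ℝ :=
  (((hσ.mul_mul_conjTranspose_same hρ.sqrt).sqrt).trace).re

open scoped MatrixOrder

namespace Matrix

variable {n : Type*} [Fintype n] [DecidableEq n]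

lemma PosSemidef.sqrt_eq_cfcSqrt {A : Matrix n n ℂ} (hA : A.PosSemidef) :
    hA.sqrt = CFC.sqrt A := by
  rw [CFC.sqrt_eq_real_sqrt A hA.nonneg, cfcₙ_eq_cfc, hA.1.cfc_eq, IsHermitian.cfc,
    Unitary.conjStarAlgAut_apply]
  rfl

omit [DecidableEq n] in
lemma re_trace_nonneg {A : Matrix n n ℂ} (hA : 0 ≤ A) : 0 ≤ A.trace.re :=
  (Complex.nonneg_iff.mp hA.posSemidef.trace_nonneg).1

omit [Fintype n] [DecidableEq n] in
lemma re_diag_nonneg {A : Matrix n n ℂ} (hA : 0 ≤ A) (i : n) : 0 ≤ (A i i).re :=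
  (Complex.nonneg_iff.mp hA.posSemidef.diag_nonneg).1

omit [DecidableEq n] in
lemma re_trace_conjTranspose_mul_comm (X Y : Matrix n n ℂ) :
    (Yᴴ * X).trace.re = (Xᴴ * Y).trace.re := by
  rw [← conjTranspose_conjTranspose X, ← conjTranspose_mul, trace_conjTranspose,
    Complex.star_def, Complex.conj_re, conjTranspose_conjTranspose]

omit [DecidableEq n] in
lemma trace_conjTranspose_mul_mul_conjTranspose (U X Y : Matrix n n ℂ) :
    (Uᴴ * (X * Yᴴ)).trace = ((U * Y)ᴴ * X).trace := by
  rw [← Matrix.mul_assoc, trace_mul_cycle, conjTranspose_mul]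

lemma conjTranspose_mul_self_unitary_mul {U : Matrix n n ℂ} (hU : U ∈ unitaryGroup n ℂ)
    (X : Matrix n n ℂ) : (U * X)ᴴ * (U * X) = Xᴴ * X := by
  have hUU : Uᴴ * U = 1 := mem_unitaryGroup_iff'.mp hU
  rw [conjTranspose_mul, Matrix.mul_assoc, ← Matrix.mul_assoc Uᴴ, hUU, Matrix.one_mul]

lemma trace_conjStarAlgAut (U : unitary (Matrix n n ℂ)) (A : Matrix n n ℂ) :
    (Unitary.conjStarAlgAut ℂ _ U A).trace = A.trace := by
  rw [Unitary.conjStarAlgAut_apply, trace_mul_cycle, Unitary.coe_star_mul_self, Matrix.one_mul]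

lemma le_cfcAbs_self {A : Matrix n n ℂ} (hA : IsSelfAdjoint A) : A ≤ CFC.abs A := by
  rw [← sub_nonneg, CFC.abs_sub_self A hA]
  exact smul_nonneg zero_le_two (CFC.negPart_nonneg A)

lemma neg_le_cfcAbs {A : Matrix n n ℂ} (hA : IsSelfAdjoint A) : -A ≤ CFC.abs A := by
  rw [← sub_nonneg, sub_neg_eq_add, CFC.abs_add_self A hA]
  exact smul_nonneg zero_le_two (CFC.posPart_nonneg A)

/-- Cauchy–Schwarz in `toMatrixInnerProductSpace 1`, whose inner product is
`⟪X, Y⟫ = tr (Y Xᴴ)`. -/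
lemma norm_trace_conjTranspose_mul_sq_le (X Y : Matrix n n ℂ) :
    ‖(Xᴴ * Y).trace‖ ^ 2 ≤ (Xᴴ * X).trace.re * (Yᴴ * Y).trace.re := by
  let _ := toMatrixSeminormedAddCommGroup (1 : Matrix n n ℂ) PosSemidef.one
  let _ := toMatrixInnerProductSpace (1 : Matrix n n ℂ) PosSemidef.one
  have h := inner_mul_inner_self_le (𝕜 := ℂ) Xᴴ Yᴴ
  change ‖(Yᴴ * 1 * Xᴴᴴ).trace‖ * ‖(Xᴴ * 1 * Yᴴᴴ).trace‖ ≤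
    RCLike.re (Xᴴ * 1 * Xᴴᴴ).trace * RCLike.re (Yᴴ * 1 * Yᴴᴴ).trace at h
  simp only [Matrix.mul_one, conjTranspose_conjTranspose] at h
  rwa [show Yᴴ * X = (Xᴴ * Y)ᴴ by rw [conjTranspose_mul, conjTranspose_conjTranspose],
    trace_conjTranspose, norm_star, ← sq] at h

lemma norm_toEuclideanLin_eq_of_conjTranspose_mul_self_eq {P Q : Matrix n n ℂ}
    (h : Pᴴ * P = Qᴴ * Q) (v : EuclideanSpace ℂ n) :
    ‖toEuclideanLin P v‖ = ‖toEuclideanLin Q v‖ := by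
  have norm_sq_eq (M : Matrix n n ℂ) :
      ‖toEuclideanLin M v‖ ^ 2 = RCLike.re (inner ℂ v (toEuclideanLin (Mᴴ * M) v)) := by
    rw [← inner_self_eq_norm_sq (𝕜 := ℂ), ← LinearMap.adjoint_inner_right,
      ← toEuclideanLin_conjTranspose_eq_adjoint, toEuclideanLin_eq_toLin_orthonormal,
      toLin_mul _ (EuclideanSpace.basisFun n ℂ).toBasis]
    rfl
  rw [← sq_eq_sq₀ (norm_nonneg _) (norm_nonneg _), norm_sq_eq, norm_sq_eq, h]

theorem exists_unitary_mul_eq_of_conjTranspose_mul_self_eq {P Q : Matrix n n ℂ}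
    (h : Pᴴ * P = Qᴴ * Q) : ∃ U ∈ unitaryGroup n ℂ, U * Q = P := by
  set p := toEuclideanLin P
  set q := toEuclideanLin Q
  have hnorm := norm_toEuclideanLin_eq_of_conjTranspose_mul_self_eq h
  have hker : LinearMap.ker q ≤ LinearMap.ker p := fun v hv => by
    rw [LinearMap.mem_ker, ← norm_eq_zero] at hv ⊢
    rwa [hnorm]
  let L₀ := (LinearMap.ker q).liftQ p hker ∘ₗ q.quotKerEquivRange.symm.toLinearMap
  have hL₀ (v) : L₀ ⟨q v, LinearMap.mem_range_self q v⟩ = p v := by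
    simp only [L₀, LinearMap.coe_comp, Function.comp_apply, LinearEquiv.coe_coe,
      LinearMap.quotKerEquivRange_symm_apply_image, Submodule.mkQ_apply, Submodule.liftQ_apply]
  -- `Q v ↦ P v` is a well-defined isometry on the range of `Q`; extend it to a unitary
  let L : LinearMap.range q →ₗᵢ[ℂ] EuclideanSpace ℂ n :=
    { toLinearMap := L₀
      norm_map' := by
        rintro ⟨w, hw⟩
        obtain ⟨v, rfl⟩ := LinearMap.mem_range.mp hw
        exact (congrArg norm (hL₀ v)).trans (hnorm v) }
  let b := EuclideanSpace.basisFun n ℂ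
  let W := L.extend.toLinearIsometryEquiv rfl
  refine ⟨LinearMap.toMatrix b.toBasis b.toBasis W.toLinearEquiv,
    W.toMatrix_mem_unitaryGroup b b, ?_⟩
  apply toEuclideanLin.injective
  rw [toEuclideanLin_eq_toLin_orthonormal, toLin_mul _ b.toBasis, toLin_toMatrix,
    ← toEuclideanLin_eq_toLin_orthonormal]
  ext1 v
  exact (L.extend_apply ⟨q v, LinearMap.mem_range_self q v⟩).trans (hL₀ v)

theorem exists_unitary_mul_cfcAbs_eq (M : Matrix n n ℂ) :
    ∃ U ∈ unitaryGroup n ℂ, U * CFC.abs M = M := by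
  refine exists_unitary_mul_eq_of_conjTranspose_mul_self_eq ?_
  rw [(CFC.abs_nonneg M).posSemidef.1.eq]
  exact (CFC.abs_mul_abs M).symm

lemma norm_trace_le_re_trace_cfcAbs (M : Matrix n n ℂ) :
    ‖M.trace‖ ≤ (CFC.abs M).trace.re := by
  obtain ⟨U, hU, hM⟩ := exists_unitary_mul_cfcAbs_eq M
  set S := CFC.sqrt (CFC.abs M)
  have hS : Sᴴ = S := (CFC.sqrt_nonneg _).posSemidef.1.eq
  have hSS : S * S = CFC.abs M := CFC.sqrt_mul_sqrt_self _ (CFC.abs_nonneg M)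
  have htr : (S * (U * S)).trace = M.trace := by
    rw [trace_mul_comm, Matrix.mul_assoc, hSS, hM]
  have h := norm_trace_conjTranspose_mul_sq_le S (U * S)
  rw [conjTranspose_mul_self_unitary_mul hU, hS, hSS, htr, ← sq] at h
  exact (pow_le_pow_iff_left₀ (norm_nonneg _) (re_trace_nonneg (CFC.abs_nonneg M))
    two_ne_zero).mp h

/-- Hölder's inequality `‖XYᴴ + YXᴴ‖₁ ≤ 2 ‖X‖₂ ‖Y‖₂`, squared. -/
lemma re_trace_cfcAbs_sq_le {Δ X Y : Matrix n n ℂ} (hΔ : Δ + Δ = X * Yᴴ + Y * Xᴴ) :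
    (CFC.abs Δ).trace.re ^ 2 ≤ (Xᴴ * X).trace.re * (Yᴴ * Y).trace.re := by
  obtain ⟨U, hU, hΔU⟩ := exists_unitary_mul_cfcAbs_eq Δ
  have hUU : Uᴴ * U = 1 := mem_unitaryGroup_iff'.mp hU
  have habs : Uᴴ * Δ = CFC.abs Δ := by
    conv_lhs => rw [← hΔU, ← Matrix.mul_assoc, hUU, Matrix.one_mul]
  have hsplit : (CFC.abs Δ).trace + (CFC.abs Δ).trace =
      ((U * Y)ᴴ * X).trace + ((U * X)ᴴ * Y).trace := by
    rw [← habs, ← trace_add, ← Matrix.mul_add, hΔ, Matrix.mul_add, trace_add,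
      trace_conjTranspose_mul_mul_conjTranspose, trace_conjTranspose_mul_mul_conjTranspose]
  have h₁ := norm_trace_conjTranspose_mul_sq_le (U * Y) X
  have h₂ := norm_trace_conjTranspose_mul_sq_le (U * X) Y
  rw [conjTranspose_mul_self_unitary_mul hU] at h₁ h₂
  have hle : (CFC.abs Δ).trace.re + (CFC.abs Δ).trace.re ≤
      ‖((U * Y)ᴴ * X).trace‖ + ‖((U * X)ᴴ * Y).trace‖ := by
    rw [← Complex.add_re, hsplit]
    exact (Complex.re_le_norm _).trans (norm_add_le _ _)
  have ht := re_trace_nonneg (CFC.abs_nonneg Δ)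
  nlinarith [mul_self_le_mul_self (by positivity) hle,
    sq_nonneg (‖((U * Y)ᴴ * X).trace‖ - ‖((U * X)ᴴ * Y).trace‖)]

lemma re_trace_cfcAbs_mul_conjTranspose_sub_sq_le {A C : Matrix n n ℂ}
    (hA : (Aᴴ * A).trace = 1) (hC : (Cᴴ * C).trace = 1) :
    (CFC.abs (A * Aᴴ - C * Cᴴ)).trace.re ^ 2 ≤
      (2 - 2 * (Aᴴ * C).trace.re) * (2 + 2 * (Aᴴ * C).trace.re) := by
  have hCA := re_trace_conjTranspose_mul_comm C A
  have hsub : ((A - C)ᴴ * (A - C)).trace.re = 2 - 2 * (Aᴴ * C).trace.re := by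
    rw [conjTranspose_sub, sub_mul, mul_sub, mul_sub, trace_sub, trace_sub, trace_sub, hA, hC]
    simp only [Complex.sub_re, Complex.one_re]
    linarith
  have hadd : ((A + C)ᴴ * (A + C)).trace.re = 2 + 2 * (Aᴴ * C).trace.re := by
    rw [conjTranspose_add, add_mul, mul_add, mul_add, trace_add, trace_add, trace_add, hA, hC]
    simp only [Complex.add_re, Complex.one_re]
    linarith
  rw [← hsub, ← hadd]
  exact re_trace_cfcAbs_sq_le (by rw [conjTranspose_add, conjTranspose_sub]; noncomm_ring)

lemma exists_mul_conjTranspose_eq_and_conjTranspose_mul_eq_cfcAbs (A B : Matrix n n ℂ) :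
    ∃ C, C * Cᴴ = Bᴴ * B ∧ Aᴴ * C = CFC.abs (B * A) := by
  obtain ⟨U, hU, hBA⟩ := exists_unitary_mul_cfcAbs_eq (B * A)
  have hUU : Uᴴ * U = 1 := mem_unitaryGroup_iff'.mp hU
  have hUU' : U * Uᴴ = 1 := mem_unitaryGroup_iff.mp hU
  have hsa : (CFC.abs (B * A))ᴴ = CFC.abs (B * A) := (CFC.abs_nonneg _).posSemidef.1.eq
  refine ⟨Bᴴ * U, ?_, ?_⟩
  · rw [conjTranspose_mul, conjTranspose_conjTranspose, Matrix.mul_assoc, ← Matrix.mul_assoc U,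
      hUU', Matrix.one_mul]
  · conv_lhs => rw [← Matrix.mul_assoc, ← conjTranspose_mul, ← hBA, conjTranspose_mul, hsa,
      Matrix.mul_assoc, hUU, Matrix.mul_one]

/-- The Powers–Størmer inequality when `A - B` is diagonal, with `T` in the role of
`|A * A - B * B|`. -/
lemma re_trace_sub_mul_sub_le_of_sub_eq_diagonal {A B T : Matrix n n ℂ} (hA : 0 ≤ A)
    (hB : 0 ≤ B) {d : n → ℝ} (hd : A - B = diagonal fun i ↦ (d i : ℂ))
    (hT : A * A - B * B ≤ T) (hT' : -(A * A - B * B) ≤ T) :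
    ((A - B) * (A - B)).trace.re ≤ T.trace.re := by
  have hsq : A * A - B * B + (A * A - B * B) = (A - B) * (A + B) + (A + B) * (A - B) := by
    noncomm_ring
  set Δ := A * A - B * B
  rw [hd, diagonal_mul_diagonal, trace_diagonal, trace, Complex.re_sum, Complex.re_sum]
  refine Finset.sum_le_sum fun i _ ↦ ?_
  have hdi : d i = (A i i).re - (B i i).re := by
    simpa using congrArg (fun M ↦ (M i i).re) hd.symm
  have hΔi : (Δ i i).re = d i * ((A i i).re + (B i i).re) := by
    have := congrArg (fun M ↦ (M i i).re) hsq
    rw [hd] at this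
    simp only [add_apply, diagonal_mul, mul_diagonal, Complex.add_re, Complex.mul_re,
      Complex.ofReal_re, Complex.ofReal_im, zero_mul, mul_zero, sub_zero] at this
    linarith
  have h₁ := re_diag_nonneg (sub_nonneg.mpr hT) i
  have h₂ := re_diag_nonneg (sub_nonneg.mpr hT') i
  rw [sub_apply, Complex.sub_re] at h₁ h₂
  rw [neg_apply, Complex.neg_re] at h₂
  have ha := re_diag_nonneg hA i
  have hb := re_diag_nonneg hB i
  simp only [diag_apply, ← Complex.ofReal_mul, Complex.ofReal_re]
  -- `(a - b)² ≤ |a - b| (a + b) = |Δᵢᵢ| ≤ Tᵢᵢ`, where `a, b ≥ 0` are the entries `Aᵢᵢ, Bᵢᵢ`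
  rcases le_total 0 (d i) with h | h <;> nlinarith

/-- The Powers–Størmer inequality `‖A - B‖₂² ≤ ‖A * A - B * B‖₁`. -/
theorem re_trace_sub_mul_sub_le {A B : Matrix n n ℂ} (hA : 0 ≤ A) (hB : 0 ≤ B) :
    ((A - B) * (A - B)).trace.re ≤ (CFC.abs (A * A - B * B)).trace.re := by
  have hAB : (A - B).IsHermitian := hA.posSemidef.1.sub hB.posSemidef.1
  have hsq {X : Matrix n n ℂ} (hX : 0 ≤ X) : IsSelfAdjoint (X * X) := by
    simpa only [(IsSelfAdjoint.of_nonneg hX).star_eq] using IsSelfAdjoint.star_mul_self X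
  have hΔ : IsSelfAdjoint (A * A - B * B) := (hsq hA).sub (hsq hB)
  set φ := Unitary.conjStarAlgAut ℂ (Matrix n n ℂ) (star hAB.eigenvectorUnitary)
  have key := re_trace_sub_mul_sub_le_of_sub_eq_diagonal (map_nonneg φ hA) (map_nonneg φ hB)
    (T := φ (CFC.abs (A * A - B * B)))
    (by rw [← map_sub]; exact hAB.conjStarAlgAut_star_eigenvectorUnitary)
    (by simpa only [map_sub, map_mul] using (map_le_map_iff φ).mpr (le_cfcAbs_self hΔ))
    (by simpa only [map_neg, map_sub, map_mul] using
      (map_le_map_iff φ).mpr (neg_le_cfcAbs hΔ))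
  rwa [← map_sub, ← map_mul, trace_conjStarAlgAut, trace_conjStarAlgAut] at key

end Matrix

lemma traceDist_eq_re_trace_cfcAbs {d : Type*} [Fintype d] [DecidableEq d]
    (ρ σ : Matrix d d ℂ) :
    traceDist ρ σ = (CFC.abs (ρ - σ)).trace.re / 2 := by
  rw [traceDist, PosSemidef.sqrt_eq_cfcSqrt]
  rfl

lemma fidelity_eq_re_trace_cfcAbs {d : Type*} [Fintype d] [DecidableEq d] {ρ σ : Matrix d d ℂ}
    (hρ : ρ.PosSemidef) (hσ : σ.PosSemidef) :
    fidelity hρ hσ = (CFC.abs (CFC.sqrt σ * CFC.sqrt ρ)).trace.re := by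
  have hA : (CFC.sqrt ρ)ᴴ = CFC.sqrt ρ := (CFC.sqrt_nonneg ρ).posSemidef.1.eq
  have hB : (CFC.sqrt σ)ᴴ = CFC.sqrt σ := (CFC.sqrt_nonneg σ).posSemidef.1.eq
  have h : CFC.sqrt ρ * σ * (CFC.sqrt ρ)ᴴ =
      star (CFC.sqrt σ * CFC.sqrt ρ) * (CFC.sqrt σ * CFC.sqrt ρ) := by
    rw [star_eq_conjTranspose, conjTranspose_mul, hA, hB]
    simp only [Matrix.mul_assoc]
    rw [← Matrix.mul_assoc (CFC.sqrt σ) (CFC.sqrt σ), CFC.sqrt_mul_sqrt_self σ hσ.nonneg]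
  rw [fidelity, PosSemidef.sqrt_eq_cfcSqrt, CFC.abs, ← h, ← PosSemidef.sqrt_eq_cfcSqrt hρ]

namespace IsDensity

variable {d : Type*} [Fintype d] [DecidableEq d] {ρ σ : Matrix d d ℂ}

lemma one_sub_re_trace_cfcAbs_le (hρ : IsDensity ρ) (hσ : IsDensity σ) :
    1 - (CFC.abs (CFC.sqrt σ * CFC.sqrt ρ)).trace.re ≤ (CFC.abs (ρ - σ)).trace.re / 2 := by
  set A := CFC.sqrt ρ
  set B := CFC.sqrt σ
  have hAA : A * A = ρ := CFC.sqrt_mul_sqrt_self ρ hρ.1.nonneg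
  have hBB : B * B = σ := CFC.sqrt_mul_sqrt_self σ hσ.1.nonneg
  have hps := re_trace_sub_mul_sub_le (CFC.sqrt_nonneg ρ) (CFC.sqrt_nonneg σ)
  have hexp : (A - B) * (A - B) = A * A + B * B - A * B - B * A := by noncomm_ring
  rw [hAA, hBB] at hps
  rw [hexp, trace_sub, trace_sub, trace_add, hAA, hBB, hρ.2, hσ.2, trace_mul_comm A B] at hps
  have hBA := (Complex.re_le_norm (B * A).trace).trans (norm_trace_le_re_trace_cfcAbs (B * A))
  simp only [Complex.sub_re, Complex.add_re, Complex.one_re] at hps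
  linarith

lemma re_trace_cfcAbs_le (hρ : IsDensity ρ) (hσ : IsDensity σ) :
    (CFC.abs (ρ - σ)).trace.re / 2 ≤
      √(1 - (CFC.abs (CFC.sqrt σ * CFC.sqrt ρ)).trace.re ^ 2) := by
  set A := CFC.sqrt ρ
  obtain ⟨C, hCC, hAC⟩ :=
    exists_mul_conjTranspose_eq_and_conjTranspose_mul_eq_cfcAbs A (CFC.sqrt σ)
  have hAA : A * Aᴴ = ρ := by
    rw [(CFC.sqrt_nonneg ρ).posSemidef.1.eq, CFC.sqrt_mul_sqrt_self ρ hρ.1.nonneg]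
  rw [(CFC.sqrt_nonneg σ).posSemidef.1.eq, CFC.sqrt_mul_sqrt_self σ hσ.1.nonneg] at hCC
  have h := re_trace_cfcAbs_mul_conjTranspose_sub_sq_le (A := A) (C := C)
    (by rw [trace_mul_comm, hAA, hρ.2]) (by rw [trace_mul_comm, hCC, hσ.2])
  rw [hAA, hCC, hAC] at h
  refine (le_abs_self _).trans (Real.abs_le_sqrt ?_)
  nlinarith

end IsDensity

/-- Fuchs–van de Graaf inequalities:
`1 - F(ρ,σ) ≤ ‖ρ-σ‖_tr ≤ √(1 - F(ρ,σ)²)` for density operators `ρ, σ`. -/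
theorem fuchs_van_de_graaf
    {d : Type*} [Fintype d] [DecidableEq d]
    (ρ σ : Matrix d d ℂ) (hρ : IsDensity ρ) (hσ : IsDensity σ) :
    1 - fidelity hρ.1 hσ.1 ≤ traceDist ρ σ ∧
      traceDist ρ σ ≤ Real.sqrt (1 - (fidelity hρ.1 hσ.1) ^ 2) := by
  rw [fidelity_eq_re_trace_cfcAbs, traceDist_eq_re_trace_cfcAbs]
  exact ⟨hρ.one_sub_re_trace_cfcAbs_le hσ, hρ.re_trace_cfcAbs_le hσ⟩
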